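/- arXiv:1906.01350 — 3 statements merged into one kernel-verified Lean document; each statement's English description precedes it below -/
import Mathlib

section
/- Let X and Y be topological spaces and let π : X → Y be an open map (the image of every open set is open). Let D ⊆ Y be a dense subset of Y, and let S ⊆ X be a set such that for every y ∈ D, the set S ∩ π⁻¹(y) is dense in the fiber π⁻¹(y) (with its subspace topology). Then S is dense in X. -/
/-- Inductive step underlying Theorem 3 of the paper: if `π : X → Y` is an open map,
`D` is dense in `Y`, and `S` is dense in every fiber `π⁻¹(y)` (with its subspace topology)
over points `y ∈ D`, then `S` is dense in `X`. -/
theorem dense_of_dense_fibers {X Y : Type*} [TopologicalSpace X] [TopologicalSpace Y]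
    (π : X → Y) (hπ : IsOpenMap π) (D : Set Y) (hD : Dense D)
    (S : Set X)
    (hfib : ∀ y ∈ D, π ⁻¹' {y} ⊆ closure (S ∩ π ⁻¹' {y})) :
    Dense S := by
  rw [dense_iff_inter_open]
  intro U hU hUne
  obtain ⟨x0, hx0U⟩ := hUne
  obtain ⟨y, hyIm, hyD⟩ :=
    hD.inter_open_nonempty _ (hπ U hU) ⟨π x0, ⟨x0, hx0U, rfl⟩⟩
  obtain ⟨x, hxU, hxy⟩ := hyIm
  have hx : x ∈ closure (S ∩ π ⁻¹' {y}) := hfib y hyD hxy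
  obtain ⟨z, hzU, hzS, _⟩ :=
    mem_closure_iff.mp hx U hU hxU
  exact ⟨z, hzU, hzS⟩
end

section
/- Let X and Y be topological spaces and let π : X → Y be an open map. Let F ⊆ X be an open set (the free subset of X), let D ⊆ Y be a set that is dense in the subspace π(F) (i.e. π(F) is contained in the closure of D), and let S ⊆ X be a set such that for every y ∈ D, the set S ∩ π⁻¹(y) is dense in the fiber π⁻¹(y) (with its subspace topology). Then S is dense in the subspace F, i.e. F is contained in the closure of S. -/
/-- Inductive step of Theorem 3 of the paper, restricted to the free configuration space:
if `π : X → Y` is an open map, `F ⊆ X` is open, the set `D ⊆ Y` is dense in the subspace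
`π(F)`, and `S` is dense in every fiber `π⁻¹(y)` (with its subspace topology) over points
`y ∈ D`, then `S` is dense in the subspace `F`, i.e. `F ⊆ closure S`. -/
theorem dense_in_free_of_dense_fibers {X Y : Type*} [TopologicalSpace X] [TopologicalSpace Y]
    (π : X → Y) (hπ : IsOpenMap π) (F : Set X) (hF : IsOpen F)
    (D : Set Y) (hD : π '' F ⊆ closure D)
    (S : Set X)
    (hfib : ∀ y ∈ D, π ⁻¹' {y} ⊆ closure (S ∩ π ⁻¹' {y})) :
    F ⊆ closure S := by
  intro x hx
  rw [mem_closure_iff]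
  intro U hU hxU
  -- V = U ∩ F is open and contains x
  have hV : IsOpen (U ∩ F) := hU.inter hF
  have hxV : x ∈ U ∩ F := ⟨hxU, hx⟩
  -- π(V) is open and contains π x ∈ closure D, so meets D
  have hπx : π x ∈ closure D := hD ⟨x, hx, rfl⟩
  have h1 : (π '' (U ∩ F) ∩ D).Nonempty := by
    rw [mem_closure_iff] at hπx
    exact hπx _ (hπ _ hV) ⟨x, hxV, rfl⟩
  obtain ⟨y, ⟨x', hx'V, hx'y⟩, hyD⟩ := h1
  -- x' ∈ fiber over y, which is in closure of S ∩ fiber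
  have hx'cl : x' ∈ closure (S ∩ π ⁻¹' {y}) := hfib y hyD hx'y
  rw [mem_closure_iff] at hx'cl
  obtain ⟨z, hzV, hzS, _⟩ := hx'cl _ hV hx'V
  exact ⟨z, hzV.1, hzS⟩
end

section
/- Let K ≥ 1 and let X_1, …, X_K be topological spaces with open maps π_k : X_{k+1} → X_k for 1 ≤ k ≤ K−1. Let F ⊆ X_K be an open set (the free subset of X_K) such that the successive projections of F are open in each X_k, i.e. setting F_K = F and F_k = π_k(F_{k+1}), each F_k is open. Let α_1 ⊆ X_1 be dense in X_1, and for each 1 < k ≤ K let α_k ⊆ X_k be a set such that for every y ∈ α_{k−1} the set α_k ∩ π_{k−1}⁻¹(y) is dense in the fiber π_{k−1}⁻¹(y) (with its subspace topology). Then α_K is dense in the subspace F, i.e. F is contained in the closure of α_K. -/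
/-- Theorem 3 of the paper: given a sequence of quotient spaces `X 1, …, X K`
(`K ≥ 1`) with open projections `π k : X (k+1) → X k` for `1 ≤ k ≤ K-1`, an open free
set `F k` on each level with `F K` the free subset of the configuration space and
`F k = π k '' F (k+1)`, and QRRT sampling sequences `α k` such that `α 1` is dense in
`X 1` and, for `1 ≤ k ≤ K-1`, `α (k+1)` is dense in every fiber `(π k)⁻¹(y)` over points
`y ∈ α k`, the top sampling sequence `α K` is dense in the free subspace `F K`. -/
theorem qrrt_sampling_dense_in_free
    (K : ℕ) (hK : 1 ≤ K)
    (X : ℕ → Type*) [∀ k, TopologicalSpace (X k)]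
    (π : (k : ℕ) → X (k + 1) → X k)
    (hπ : ∀ k, 1 ≤ k → k ≤ K - 1 → IsOpenMap (π k))
    (F : (k : ℕ) → Set (X k))
    (hFproj : ∀ k, 1 ≤ k → k < K → F k = π k '' F (k + 1))
    (hFopen : ∀ k, 1 ≤ k → k ≤ K → IsOpen (F k))
    (α : (k : ℕ) → Set (X k))
    (hα1 : Dense (α 1))
    (hαfib : ∀ k, 1 ≤ k → k < K →
      ∀ y ∈ α k, (π k) ⁻¹' {y} ⊆ closure (α (k + 1) ∩ (π k) ⁻¹' {y})) :
    F K ⊆ closure (α K) := by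
  have key : ∀ k, 1 ≤ k → k ≤ K → F k ⊆ closure (α k) := by
    intro k hk
    induction k, hk using Nat.le_induction with
    | base => exact fun _ x _ => hα1 x
    | succ k hk ih =>
      intro hkK
      have hkK' : k < K := Nat.lt_of_succ_le hkK
      intro x hx
      rw [mem_closure_iff]
      intro U hU hxU
      have hWopen : IsOpen (U ∩ F (k + 1)) := hU.inter (hFopen (k + 1) (by omega) hkK)
      have hxW : x ∈ U ∩ F (k + 1) := ⟨hxU, hx⟩
      have hVopen : IsOpen (π k '' (U ∩ F (k + 1))) := hπ k hk (by omega) _ hWopen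
      have hπx : π k x ∈ F k := (hFproj k hk hkK') ▸ ⟨x, hx, rfl⟩
      have hclo : π k x ∈ closure (α k) := ih (by omega) hπx
      obtain ⟨y, hyV, hyα⟩ := mem_closure_iff.mp hclo _ hVopen ⟨x, hxW, rfl⟩
      obtain ⟨x', hx'W, hx'y⟩ := hyV
      have hx'c : x' ∈ closure (α (k + 1) ∩ π k ⁻¹' {y}) :=
        hαfib k hk hkK' y hyα hx'y
      obtain ⟨z, hzU, hzα, _⟩ := mem_closure_iff.mp hx'c U hU hx'W.1
      exact ⟨z, hzU, hzα⟩
  exact key K hK le_rfl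
end
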